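/- Let k ≥ 1 and consider sequences of 4k rows, each row a strictly increasing pair from {1,…,6}, arranged so that both coordinate sequences are non-decreasing down the rows, no row contains both t and 7−t for any t, each consecutive pair (row_{2i−1}, row_{2i}) is admissible, and the multiset of entries satisfies c(t) = c(7−t) for all t. If such a sequence exists with first row (2,4), then rows 1 and 2 both equal (2,4) and rows 4k−1 and 4k both equal (3,5). -/
import Mathlib


/-- Admissibility of a pair of rows (each a pair of Plücker indices) for
`Spin₇/P_{α₂}` tableaux. -/
def AdmissiblePair (r r' : ℕ × ℕ) : Prop :=
  r = r' ∨ (r, r') ∈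
    ({(((1:ℕ),(3:ℕ)), ((1:ℕ),(4:ℕ))), ((1,5), (2,6)), ((2,3), (2,4)), ((2,4), (3,5))} :
      Set ((ℕ × ℕ) × (ℕ × ℕ)))

/-- For a sequence of `4k` rows, each a strictly increasing pair from
`{1,…,6}`, with both coordinate columns non-decreasing, no row containing both
`t` and `7 - t` (i.e. the entries of a row never sum to 7), consecutive rows
`(row_{2i-1}, row_{2i})` admissible, and satisfying the zero-weight condition
`c(t) = c(7 - t)`: if the first row is `(2,4)` then the first two rows equal
`(2,4)` and the last two rows equal `(3,5)`. -/
theorem spin7_P2_row24 (k : ℕ) (hk : 1 ≤ k) (Γ : Fin (4 * k) → ℕ × ℕ)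
    (hval : ∀ i, 1 ≤ (Γ i).1 ∧ (Γ i).1 < (Γ i).2 ∧ (Γ i).2 ≤ 6)
    (hcol : ∀ i i' : Fin (4 * k), i ≤ i' → (Γ i).1 ≤ (Γ i').1 ∧ (Γ i).2 ≤ (Γ i').2)
    (hno : ∀ i, (Γ i).1 + (Γ i).2 ≠ 7)
    (hadm : ∀ i : ℕ, (h : 2 * i + 1 < 4 * k) →
      AdmissiblePair (Γ ⟨2 * i, by omega⟩) (Γ ⟨2 * i + 1, h⟩))
    (hwt : ∀ t : ℕ, 1 ≤ t → t ≤ 6 →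
      (Finset.univ.filter fun i : Fin (4 * k) => (Γ i).1 = t).card +
        (Finset.univ.filter fun i : Fin (4 * k) => (Γ i).2 = t).card =
      (Finset.univ.filter fun i : Fin (4 * k) => (Γ i).1 = 7 - t).card +
        (Finset.univ.filter fun i : Fin (4 * k) => (Γ i).2 = 7 - t).card)
    (hfirst : Γ ⟨0, by omega⟩ = (2, 4)) :
    Γ ⟨0, by omega⟩ = (2, 4) ∧ Γ ⟨1, by omega⟩ = (2, 4) ∧
    Γ ⟨4 * k - 2, by omega⟩ = (3, 5) ∧ Γ ⟨4 * k - 1, by omega⟩ = (3, 5) := by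
  classical
  -- every row dominates (2,4)
  have hlow : ∀ i : Fin (4 * k), 2 ≤ (Γ i).1 ∧ 4 ≤ (Γ i).2 := by
    intro i
    have h := hcol ⟨0, by omega⟩ i (Fin.le_def.mpr (Nat.zero_le _))
    rw [hfirst] at h
    exact h
  -- rough classification of rows
  have hrow4 : ∀ i, Γ i = (2,4) ∨ Γ i = (3,5) ∨ Γ i = (4,5) ∨ (Γ i).2 = 6 := by
    intro i
    obtain ⟨h1, h2, h3⟩ := hval i
    obtain ⟨ha, hb⟩ := hlow i
    have h7 := hno i
    simp only [Prod.ext_iff]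
    omega
  -- weight at t = 1 : no entry equals 6
  have hno6 : ∀ i : Fin (4 * k), (Γ i).2 ≠ 6 := by
    have e11 : (Finset.univ.filter fun i : Fin (4 * k) => (Γ i).1 = 1) = ∅ := by
      rw [Finset.filter_eq_empty_iff]
      intro i _
      have := (hlow i).1; omega
    have e21 : (Finset.univ.filter fun i : Fin (4 * k) => (Γ i).2 = 1) = ∅ := by
      rw [Finset.filter_eq_empty_iff]
      intro i _
      have := (hlow i).2; omega
    have h1 := hwt 1 le_rfl (by norm_num)
    rw [e11, e21] at h1
    simp only [Finset.card_empty] at h1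
    intro i hi
    have hc : (Finset.univ.filter fun j : Fin (4 * k) => (Γ j).2 = 7 - 1).card = 0 := by omega
    rw [Finset.card_eq_zero, Finset.filter_eq_empty_iff] at hc
    exact hc (Finset.mem_univ i) (by omega)
  have hrow3 : ∀ i, Γ i = (2,4) ∨ Γ i = (3,5) ∨ Γ i = (4,5) := by
    intro i
    rcases hrow4 i with h | h | h | h
    · exact Or.inl h
    · exact Or.inr (Or.inl h)
    · exact Or.inr (Or.inr h)
    · exact absurd h (hno6 i)
  -- filter identifications
  have f12 : (Finset.univ.filter fun i : Fin (4 * k) => (Γ i).1 = 2)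
      = Finset.univ.filter fun i : Fin (4 * k) => Γ i = (2,4) := by
    apply Finset.filter_congr
    intro i _
    rcases hrow3 i with h | h | h <;> rw [h] <;> simp
  have f13 : (Finset.univ.filter fun i : Fin (4 * k) => (Γ i).1 = 3)
      = Finset.univ.filter fun i : Fin (4 * k) => Γ i = (3,5) := by
    apply Finset.filter_congr
    intro i _
    rcases hrow3 i with h | h | h <;> rw [h] <;> simp
  have f14 : (Finset.univ.filter fun i : Fin (4 * k) => (Γ i).1 = 4)
      = Finset.univ.filter fun i : Fin (4 * k) => Γ i = (4,5) := by
    apply Finset.filter_congr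
    intro i _
    rcases hrow3 i with h | h | h <;> rw [h] <;> simp
  have f24 : (Finset.univ.filter fun i : Fin (4 * k) => (Γ i).2 = 4)
      = Finset.univ.filter fun i : Fin (4 * k) => Γ i = (2,4) := by
    apply Finset.filter_congr
    intro i _
    rcases hrow3 i with h | h | h <;> rw [h] <;> simp
  have f25 : (Finset.univ.filter fun i : Fin (4 * k) => (Γ i).2 = 5)
      = Finset.univ.filter fun i : Fin (4 * k) => (Γ i = (3,5) ∨ Γ i = (4,5)) := by
    apply Finset.filter_congr
    intro i _
    rcases hrow3 i with h | h | h <;> rw [h] <;> simp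
  have f22 : (Finset.univ.filter fun i : Fin (4 * k) => (Γ i).2 = 2) = ∅ := by
    rw [Finset.filter_eq_empty_iff]
    intro i _
    have := (hlow i).2; omega
  have f15 : (Finset.univ.filter fun i : Fin (4 * k) => (Γ i).1 = 5) = ∅ := by
    rw [Finset.filter_eq_empty_iff]
    intro i _
    rcases hrow3 i with h | h | h <;> rw [h] <;> simp
  have f23 : (Finset.univ.filter fun i : Fin (4 * k) => (Γ i).2 = 3) = ∅ := by
    rw [Finset.filter_eq_empty_iff]
    intro i _
    have := (hlow i).2; omega
  -- split the union in f25
  have hsplit : (Finset.univ.filter fun i : Fin (4 * k) => (Γ i = (3,5) ∨ Γ i = (4,5))).card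
      = (Finset.univ.filter fun i : Fin (4 * k) => Γ i = (3,5)).card
        + (Finset.univ.filter fun i : Fin (4 * k) => Γ i = (4,5)).card := by
    rw [Finset.filter_or]
    apply Finset.card_union_of_disjoint
    rw [Finset.disjoint_left]
    intro a ha hb
    rw [Finset.mem_filter] at ha hb
    rw [ha.2] at hb
    simp at hb
  -- weight equations
  have h2 := hwt 2 (by norm_num) (by norm_num)
  have h3 := hwt 3 (by norm_num) (by norm_num)
  norm_num at h2 h3
  rw [f12, f22, f15, f25] at h2
  rw [f13, f23, f14, f24] at h3
  rw [hsplit] at h2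
  simp only [Finset.card_empty] at h2 h3
  -- total count
  have htot : (Finset.univ.filter fun i : Fin (4 * k) => Γ i = (2,4)).card
      + ((Finset.univ.filter fun i : Fin (4 * k) => Γ i = (3,5)).card
        + (Finset.univ.filter fun i : Fin (4 * k) => Γ i = (4,5)).card) = 4 * k := by
    have h := Finset.card_filter_add_card_filter_not
      (s := (Finset.univ : Finset (Fin (4 * k)))) (p := fun i => Γ i = (2,4))
    have hneg : (Finset.univ.filter fun i : Fin (4 * k) => ¬ Γ i = (2,4))
        = Finset.univ.filter fun i : Fin (4 * k) => (Γ i = (3,5) ∨ Γ i = (4,5)) := by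
      apply Finset.filter_congr
      intro i _
      rcases hrow3 i with h | h | h <;> rw [h] <;> simp
    rw [hneg, hsplit] at h
    simpa using h
  -- solve: #(4,5) = 0, #(2,4) = #(3,5) = 2k
  have hC : (Finset.univ.filter fun i : Fin (4 * k) => Γ i = (4,5)).card = 0 := by omega
  have hA : (Finset.univ.filter fun i : Fin (4 * k) => Γ i = (2,4)).card = 2 * k := by omega
  have hB : (Finset.univ.filter fun i : Fin (4 * k) => Γ i = (3,5)).card = 2 * k := by omega
  have hno45 : ∀ i, Γ i ≠ (4,5) := by
    intro i hi
    rw [Finset.card_eq_zero, Finset.filter_eq_empty_iff] at hC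
    exact hC (Finset.mem_univ i) hi
  refine ⟨hfirst, ?_, ?_, ?_⟩
  · -- row 1 is (2,4)
    rcases hrow3 ⟨1, by omega⟩ with h | h | h
    · exact h
    · exfalso
      have hsub : (Finset.univ.filter fun i : Fin (4 * k) => Γ i = (2,4))
          ⊆ {(⟨0, by omega⟩ : Fin (4 * k))} := by
        intro j hj
        rw [Finset.mem_filter] at hj
        rw [Finset.mem_singleton]
        by_contra hj0
        have hjv : j.val ≠ 0 := fun h0 => hj0 (Fin.ext h0)
        have hle : (⟨1, by omega⟩ : Fin (4 * k)) ≤ j := by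
          rw [Fin.le_def]; show 1 ≤ j.val; omega
        have hc := (hcol _ j hle).1
        rw [h, hj.2] at hc
        simp at hc
      have hcard := Finset.card_le_card hsub
      rw [hA, Finset.card_singleton] at hcard
      omega
    · exact absurd h (hno45 _)
  · -- row 4k-2 is (3,5)
    rcases hrow3 ⟨4 * k - 2, by omega⟩ with h | h | h
    · exfalso
      have hsub : (Finset.univ.filter fun i : Fin (4 * k) => Γ i = (3,5))
          ⊆ {(⟨4 * k - 1, by omega⟩ : Fin (4 * k))} := by
        intro j hj
        rw [Finset.mem_filter] at hj
        rw [Finset.mem_singleton]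
        by_contra hj0
        have hjv : j.val ≠ 4 * k - 1 := fun h0 => hj0 (Fin.ext h0)
        have hjlt : j.val ≤ 4 * k - 2 := by
          have := j.isLt; omega
        have hle : j ≤ (⟨4 * k - 2, by omega⟩ : Fin (4 * k)) := by
          rw [Fin.le_def]; show j.val ≤ 4 * k - 2; omega
        have hc := (hcol j _ hle).2
        rw [h, hj.2] at hc
        simp at hc
      have hcard := Finset.card_le_card hsub
      rw [hB, Finset.card_singleton] at hcard
      omega
    · exact h
    · exact absurd h (hno45 _)
  · -- row 4k-1 is (3,5)
    rcases hrow3 ⟨4 * k - 1, by omega⟩ with h | h | h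
    · exfalso
      have hemp : (Finset.univ.filter fun i : Fin (4 * k) => Γ i = (3,5)) = ∅ := by
        rw [Finset.filter_eq_empty_iff]
        intro j _ hj
        have hle : j ≤ (⟨4 * k - 1, by omega⟩ : Fin (4 * k)) := by
          rw [Fin.le_def]; show j.val ≤ 4 * k - 1
          have := j.isLt; omega
        have hc := (hcol j _ hle).2
        rw [h, hj] at hc
        simp at hc
      rw [hemp] at hB
      simp at hB
      omega
    · exact h
    · exact absurd h (hno45 _)
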